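/- Let α ≥ 1. If a class C of probability distributions over a countable domain X is η-α-robustly learnable for every η ∈ (0,1), then C is 3α-robustly learnable. -/
import Mathlib


open scoped BigOperators ENNReal

namespace RobustDistLearn

variable {X : Type*}

/-- `p` is a probability mass function on `X`. -/
def IsPMF (p : X → ℝ) : Prop := (∀ x, 0 ≤ p x) ∧ ∑' x, p x = 1

/-- Total variation distance between two mass functions:
`d_TV(p,q) = (1/2)·∑ₓ |p x − q x|`. -/
noncomputable def dTV (p q : X → ℝ) : ℝ := (1 / 2) * ∑' x, |p x - q x|

/-- The probability, over a sample `S` of `n` i.i.d. draws from `p`, of the event `E`. -/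
noncomputable def iidProb (p : X → ℝ) (n : ℕ) (E : Set (Fin n → X)) : ℝ :=
  ∑' S : Fin n → X, E.indicator (fun T => ∏ i, p (T i)) S

/-- The mixture `η·q + (1−η)·p`. -/
def mix (η : ℝ) (q p : X → ℝ) : X → ℝ := fun x => η * q x + (1 - η) * p x

/-- `inf_{p' ∈ C} d_TV(p, p')`. -/
noncomputable def distToClass (p : X → ℝ) (C : Set (X → ℝ)) : ℝ := sInf (dTV p '' C)

/-- A learner maps, for each sample size `n`, a tuple `S ∈ Xⁿ` to a distribution over `X`. -/
def IsLearner (A : (n : ℕ) → (Fin n → X) → (X → ℝ)) : Prop := ∀ n S, IsPMF (A n S)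

/-- Realizable learnability of a class `C` of distributions. -/
def RealizablyLearnable (C : Set (X → ℝ)) : Prop :=
  ∃ A : (n : ℕ) → (Fin n → X) → (X → ℝ), IsLearner A ∧
    ∃ nC : ℝ → ℝ → ℕ,
      ∀ p ∈ C, ∀ ε ∈ Set.Ioo (0:ℝ) 1, ∀ δ ∈ Set.Ioo (0:ℝ) 1, ∀ n : ℕ, nC ε δ ≤ n →
        1 - δ ≤ iidProb p n {S | dTV (A n S) p ≤ ε}

/-- `α`-robust (agnostic) learnability. -/
def RobustlyLearnable (C : Set (X → ℝ)) (α : ℝ) : Prop :=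
  ∃ A : (n : ℕ) → (Fin n → X) → (X → ℝ), IsLearner A ∧
    ∃ nC : ℝ → ℝ → ℕ,
      ∀ p : X → ℝ, IsPMF p → ∀ ε ∈ Set.Ioo (0:ℝ) 1, ∀ δ ∈ Set.Ioo (0:ℝ) 1, ∀ n : ℕ, nC ε δ ≤ n →
        1 - δ ≤ iidProb p n {S | dTV (A n S) p ≤ α * distToClass p C + ε}

/-- Additive `α`-robust learnability. -/
def AdditiveRobustlyLearnable (C : Set (X → ℝ)) (α : ℝ) : Prop :=
  ∃ A : (n : ℕ) → (Fin n → X) → (X → ℝ), IsLearner A ∧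
    ∃ nC : ℝ → ℝ → ℕ,
      ∀ η ∈ Set.Ioo (0:ℝ) 1, ∀ q : X → ℝ, IsPMF q → ∀ p ∈ C,
        ∀ ε ∈ Set.Ioo (0:ℝ) 1, ∀ δ ∈ Set.Ioo (0:ℝ) 1, ∀ n : ℕ, nC ε δ ≤ n →
          1 - δ ≤ iidProb (mix η q p) n {S | dTV (A n S) (mix η q p) ≤ α * η + ε}

/-- Huber additive `α`-robust learnability: the guarantee is with respect to the clean `p`. -/
def HuberAdditiveRobustlyLearnable (C : Set (X → ℝ)) (α : ℝ) : Prop :=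
  ∃ A : (n : ℕ) → (Fin n → X) → (X → ℝ), IsLearner A ∧
    ∃ nC : ℝ → ℝ → ℕ,
      ∀ η ∈ Set.Ioo (0:ℝ) 1, ∀ q : X → ℝ, IsPMF q → ∀ p ∈ C,
        ∀ ε ∈ Set.Ioo (0:ℝ) 1, ∀ δ ∈ Set.Ioo (0:ℝ) 1, ∀ n : ℕ, nC ε δ ≤ n →
          1 - δ ≤ iidProb (mix η q p) n {S | dTV (A n S) p ≤ α * η + ε}

/-- Subtractive `α`-robust learnability. -/
def SubtractiveRobustlyLearnable (C : Set (X → ℝ)) (α : ℝ) : Prop :=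
  ∃ A : (n : ℕ) → (Fin n → X) → (X → ℝ), IsLearner A ∧
    ∃ nC : ℝ → ℝ → ℕ,
      ∀ η ∈ Set.Ioo (0:ℝ) 1, ∀ p : X → ℝ, IsPMF p →
        (∃ q : X → ℝ, IsPMF q ∧ mix η q p ∈ C) →
        ∀ ε ∈ Set.Ioo (0:ℝ) 1, ∀ δ ∈ Set.Ioo (0:ℝ) 1, ∀ n : ℕ, nC ε δ ≤ n →
          1 - δ ≤ iidProb p n {S | dTV (A n S) p ≤ α * η + ε}

/-- `η`-`α`-robust learnability (known corruption level `η`). -/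
def EtaRobustlyLearnable (C : Set (X → ℝ)) (η α : ℝ) : Prop :=
  ∃ A : (n : ℕ) → (Fin n → X) → (X → ℝ), IsLearner A ∧
    ∃ nC : ℝ → ℝ → ℕ,
      ∀ p : X → ℝ, IsPMF p → distToClass p C ≤ η →
        ∀ ε ∈ Set.Ioo (0:ℝ) 1, ∀ δ ∈ Set.Ioo (0:ℝ) 1, ∀ n : ℕ, nC ε δ ≤ n →
          1 - δ ≤ iidProb p n {S | dTV (A n S) p ≤ α * η + ε}

/-- `η`-additive `α`-robust learnability (known corruption level `η`). -/
def EtaAdditiveRobustlyLearnable (C : Set (X → ℝ)) (η α : ℝ) : Prop :=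
  ∃ A : (n : ℕ) → (Fin n → X) → (X → ℝ), IsLearner A ∧
    ∃ nC : ℝ → ℝ → ℕ,
      ∀ q : X → ℝ, IsPMF q → ∀ p ∈ C,
        ∀ ε ∈ Set.Ioo (0:ℝ) 1, ∀ δ ∈ Set.Ioo (0:ℝ) 1, ∀ n : ℕ, nC ε δ ≤ n →
          1 - δ ≤ iidProb (mix η q p) n {S | dTV (A n S) (mix η q p) ≤ α * η + ε}

/-- `η`-subtractive `α`-robust learnability (known corruption level `η`). -/
def EtaSubtractiveRobustlyLearnable (C : Set (X → ℝ)) (η α : ℝ) : Prop :=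
  ∃ A : (n : ℕ) → (Fin n → X) → (X → ℝ), IsLearner A ∧
    ∃ nC : ℝ → ℝ → ℕ,
      ∀ p : X → ℝ, IsPMF p →
        (∃ q : X → ℝ, IsPMF q ∧ mix η q p ∈ C) →
        ∀ ε ∈ Set.Ioo (0:ℝ) 1, ∀ δ ∈ Set.Ioo (0:ℝ) 1, ∀ n : ℕ, nC ε δ ≤ n →
          1 - δ ≤ iidProb p n {S | dTV (A n S) p ≤ α * η + ε}

/-- The probability of an event under a `PMF`. -/
noncomputable def pmfProb {Y : Type*} (m : PMF Y) (E : Set Y) : ℝ :=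
  (m.toOuterMeasure E).toReal

/-- `(ε,δ)`-differential privacy of a randomized algorithm on inputs of size `n`. -/
def IsDP {Y : Type*} {n : ℕ} (M : (Fin n → X) → PMF Y) (ε δ : ℝ) : Prop :=
  ∀ x x' : Fin n → X, (∃ i : Fin n, ∀ j : Fin n, j ≠ i → x j = x' j) →
    ∀ B : Set Y,
      (M x).toOuterMeasure B ≤
        ENNReal.ofReal (Real.exp ε) * (M x').toOuterMeasure B + ENNReal.ofReal δ

/-- Probability, jointly over `S ~ pⁿ` and the internal randomness of `M`, of the event `E`
on the output of `M`. -/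
noncomputable def randIidProb {Y : Type*} (p : X → ℝ) (n : ℕ)
    (M : (Fin n → X) → PMF Y) (E : Set Y) : ℝ :=
  ∑' S : Fin n → X, (∏ i, p (S i)) * pmfProb (M S) E

/-- Approximate DP learnability. -/
def ApproxDPLearnable (C : Set (X → ℝ)) : Prop :=
  ∃ Alg : (n : ℕ) → (Fin n → X) → PMF (X → ℝ),
    (∀ n S f, f ∈ (Alg n S).support → IsPMF f) ∧
    ∃ nC : ℝ → ℝ → ℝ → ℝ → ℕ,
      ∀ p ∈ C, ∀ α ∈ Set.Ioo (0:ℝ) 1, ∀ β ∈ Set.Ioo (0:ℝ) 1,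
        ∀ ε ∈ Set.Ioo (0:ℝ) 1, ∀ δ ∈ Set.Ioo (0:ℝ) 1, ∀ n : ℕ, nC α β ε δ ≤ n →
          IsDP (Alg n) ε δ ∧
          1 - β ≤ randIidProb p n (Alg n) {f | dTV p f ≤ α}

/-- Pure DP learnability. -/
def PureDPLearnable (C : Set (X → ℝ)) : Prop :=
  ∃ Alg : (n : ℕ) → (Fin n → X) → PMF (X → ℝ),
    (∀ n S f, f ∈ (Alg n S).support → IsPMF f) ∧
    ∃ nC : ℝ → ℝ → ℝ → ℕ,
      ∀ p ∈ C, ∀ α ∈ Set.Ioo (0:ℝ) 1, ∀ β ∈ Set.Ioo (0:ℝ) 1, ∀ ε ∈ Set.Ioo (0:ℝ) 1,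
        ∀ n : ℕ, nC α β ε ≤ n →
          IsDP (Alg n) ε 0 ∧
          1 - β ≤ randIidProb p n (Alg n) {f | dTV p f ≤ α}

/-- `α`-robust learnability by a possibly randomized learner. -/
def RandRobustlyLearnable (C : Set (X → ℝ)) (α : ℝ) : Prop :=
  ∃ Alg : (n : ℕ) → (Fin n → X) → PMF (X → ℝ),
    (∀ n S f, f ∈ (Alg n S).support → IsPMF f) ∧
    ∃ nC : ℝ → ℝ → ℕ,
      ∀ p : X → ℝ, IsPMF p → ∀ ε ∈ Set.Ioo (0:ℝ) 1, ∀ δ ∈ Set.Ioo (0:ℝ) 1,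
        ∀ n : ℕ, nC ε δ ≤ n →
          1 - δ ≤ randIidProb p n (Alg n) {f | dTV f p ≤ α * distToClass p C + ε}

/-- A class `C` admits `(τ, t, nf)` `r`-robust sample compression. -/
def AdmitsCompression (C : Set (X → ℝ)) (τ t nf : ℝ → ℕ) (r : ℝ) : Prop :=
  ∃ J : List X → List Bool → (X → ℝ),
    (∀ L B, J L B ∈ C) ∧
    ∀ q ∈ C, ∀ p : X → ℝ, IsPMF p → dTV p q ≤ r →
      ∀ ε ∈ Set.Ioo (0:ℝ) 1,
        (2 : ℝ) / 3 ≤ iidProb p (nf ε)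
          {S | ∃ L : List X, ∃ B : List Bool,
            L.length ≤ τ ε ∧ (∀ x ∈ L, ∃ i, S i = x) ∧ B.length ≤ t ε ∧
            dTV (J L B) q ≤ r + ε}

/-- The distribution `q_{i,j,k} = (1−1/j)·δ_{(0,0)} + (1/j − 1/k)·U_{A_i×{2j+1}} + (1/k)·δ_{(i,2j+2)}`
over `ℕ × ℕ`, for a given enumeration `A` of the finite nonempty subsets of `ℕ`. -/
noncomputable def qDist (A : ℕ → Finset ℕ) (i j k : ℕ) : ℕ × ℕ → ℝ := fun x =>
  (if x = (0, 0) then 1 - 1 / (j : ℝ) else 0) +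
  (if x.1 ∈ A i ∧ x.2 = 2 * j + 1 then (1 / (j : ℝ) - 1 / (k : ℝ)) / ((A i).card : ℝ) else 0) +
  (if x = (i, 2 * j + 2) then 1 / (k : ℝ) else 0)

/-- The class `Q_g = {q_{i,j,g(j)} : i, j ∈ ℕ, j ≥ 1}`. -/
def Qg (A : ℕ → Finset ℕ) (g : ℕ → ℕ) : Set (ℕ × ℕ → ℝ) :=
  {p | ∃ i j : ℕ, 1 ≤ j ∧ p = qDist A i j (g j)}

/-- The distribution `(1−γ)·δ_{(0,0)} + γ·U_{B×{2j+1}}` over `ℕ × ℕ`. -/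
noncomputable def pDist (γ : ℝ) (B : Finset ℕ) (j : ℕ) : ℕ × ℕ → ℝ := fun x =>
  (if x = (0, 0) then 1 - γ else 0) +
  (if x.1 ∈ B ∧ x.2 = 2 * j + 1 then γ / (B.card : ℝ) else 0)

/-- `g : ℕ → ℕ` is superlinear: `g(t)/t → ∞`. -/
def Superlinear (g : ℕ → ℕ) : Prop :=
  Filter.Tendsto (fun t : ℕ => (g t : ℝ) / (t : ℝ)) Filter.atTop Filter.atTop

section Lemmas

variable {X : Type*}

lemma IsPMF.summable' {p : X → ℝ} (hp : IsPMF p) : Summable p := by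
  by_contra hs
  have h0 := tsum_eq_zero_of_not_summable hs
  rw [hp.2] at h0; norm_num at h0

lemma summable_abs_sub {p q : X → ℝ} (hp : IsPMF p) (hq : IsPMF q) :
    Summable fun x => |p x - q x| := by
  refine Summable.of_nonneg_of_le (fun x => abs_nonneg _) (fun x => ?_)
    (hp.summable'.add hq.summable')
  calc |p x - q x| ≤ |p x| + |q x| := abs_sub _ _
    _ = p x + q x := by rw [abs_of_nonneg (hp.1 x), abs_of_nonneg (hq.1 x)]

lemma dTV_nonneg (p q : X → ℝ) : 0 ≤ dTV p q := by
  have h : 0 ≤ ∑' x, |p x - q x| := tsum_nonneg fun x => abs_nonneg _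
  unfold dTV; linarith

lemma dTV_comm (p q : X → ℝ) : dTV p q = dTV q p := by
  simp [dTV, abs_sub_comm]

lemma dTV_le_one {p q : X → ℝ} (hp : IsPMF p) (hq : IsPMF q) : dTV p q ≤ 1 := by
  have h1 : ∑' x, |p x - q x| ≤ ∑' x, (p x + q x) := by
    refine Summable.tsum_le_tsum (fun x => ?_) (summable_abs_sub hp hq)
      (hp.summable'.add hq.summable')
    calc |p x - q x| ≤ |p x| + |q x| := abs_sub _ _
      _ = p x + q x := by rw [abs_of_nonneg (hp.1 x), abs_of_nonneg (hq.1 x)]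
  have h2 : ∑' x, (p x + q x) = 2 := by
    rw [Summable.tsum_add hp.summable' hq.summable', hp.2, hq.2]; norm_num
  unfold dTV; linarith

lemma dTV_triangle {p q r : X → ℝ} (hp : IsPMF p) (hq : IsPMF q) (hr : IsPMF r) :
    dTV p r ≤ dTV p q + dTV q r := by
  have h1 : ∑' x, |p x - r x| ≤ ∑' x, (|p x - q x| + |q x - r x|) := by
    refine Summable.tsum_le_tsum (fun x => abs_sub_le _ _ _) (summable_abs_sub hp hr)
      ((summable_abs_sub hp hq).add (summable_abs_sub hq hr))
  rw [Summable.tsum_add (summable_abs_sub hp hq) (summable_abs_sub hq hr)] at h1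
  unfold dTV; linarith

lemma summable_prod_pmf {p : X → ℝ} (hp : IsPMF p) :
    ∀ n : ℕ, Summable (fun S : Fin n → X => ∏ i, p (S i)) ∧
      (∑' S : Fin n → X, ∏ i, p (S i)) = 1 := by
  intro n
  induction n with
  | zero =>
    constructor
    · exact Summable.of_finite
    · rw [tsum_fintype]
      simp
  | succ n ih =>
    have hf : Summable (fun z : X × (Fin n → X) => p z.1 * ∏ i, p (z.2 i)) :=
      Summable.mul_of_nonneg (f := p) (g := fun S : Fin n → X => ∏ i, p (S i))
        hp.summable' ih.1 hp.1 (fun T => Finset.prod_nonneg fun i _ => hp.1 _)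
    let e : (Fin (n+1) → X) ≃ X × (Fin n → X) :=
      { toFun := fun S => (S 0, fun i => S i.succ)
        invFun := fun z => Fin.cons z.1 z.2
        left_inv := fun S => funext fun i => by
          cases i using Fin.cases <;> simp
        right_inv := fun z => by simp }
    have hcomp : (fun S : Fin (n+1) → X => ∏ i, p (S i)) =
        (fun z : X × (Fin n → X) => p z.1 * ∏ i, p (z.2 i)) ∘ e := by
      funext S
      simp [e, Fin.prod_univ_succ]
    constructor
    · rw [hcomp]; exact e.summable_iff.mpr hf
    · rw [hcomp]
      have ht := e.tsum_eq (fun z : X × (Fin n → X) => p z.1 * ∏ i, p (z.2 i))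
      rw [show ((fun z : X × (Fin n → X) => p z.1 * ∏ i, p (z.2 i)) ∘ e)
          = fun S : Fin (n+1) → X =>
            (fun z : X × (Fin n → X) => p z.1 * ∏ i, p (z.2 i)) (e S) from rfl, ht]
      rw [Summable.tsum_prod' (f := fun z : X × (Fin n → X) => p z.1 * ∏ i, p (z.2 i)) hf
        (fun x => ih.1.mul_left (p x))]
      simp only [tsum_mul_left, ih.2, mul_one, hp.2]

lemma summable_indicator_prod {p : X → ℝ} (hp : IsPMF p) (n : ℕ)
    (E : Set (Fin n → X)) :
    Summable (E.indicator fun S : Fin n → X => ∏ i, p (S i)) :=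
  ((summable_prod_pmf hp n).1).indicator E

lemma iidProb_univ {p : X → ℝ} (hp : IsPMF p) (n : ℕ) :
    iidProb p n Set.univ = 1 := by
  simp only [iidProb, Set.indicator_univ]
  exact (summable_prod_pmf hp n).2

lemma iidProb_mono {p : X → ℝ} (hp : IsPMF p) {n : ℕ} {E F : Set (Fin n → X)}
    (h : E ⊆ F) : iidProb p n E ≤ iidProb p n F := by
  refine Summable.tsum_le_tsum (fun S => ?_) (summable_indicator_prod hp n E)
    (summable_indicator_prod hp n F)
  exact Set.indicator_le_indicator_of_subset h
    (fun T => Finset.prod_nonneg fun i _ => hp.1 _) S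

lemma iidProb_le_one {p : X → ℝ} (hp : IsPMF p) {n : ℕ} (E : Set (Fin n → X)) :
    iidProb p n E ≤ 1 := by
  rw [← iidProb_univ hp n]; exact iidProb_mono hp (Set.subset_univ E)

lemma iidProb_inter {p : X → ℝ} (hp : IsPMF p) {n : ℕ} (E F : Set (Fin n → X)) :
    iidProb p n E + iidProb p n F - 1 ≤ iidProb p n (E ∩ F) := by
  set μ : (Fin n → X) → ℝ := fun S => ∏ i, p (S i) with hμ
  have hμ0 : ∀ S, 0 ≤ μ S := fun S => Finset.prod_nonneg fun i _ => hp.1 _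
  have key : ∀ S, E.indicator μ S + F.indicator μ S - μ S ≤ (E ∩ F).indicator μ S := by
    intro S
    by_cases hE : S ∈ E <;> by_cases hF : S ∈ F <;>
      simp [Set.indicator_of_mem, Set.indicator_of_notMem, hE, hF,
        Set.mem_inter_iff] <;> linarith [hμ0 S]
  have hsum : Summable (fun S => E.indicator μ S + F.indicator μ S - μ S) :=
    ((summable_indicator_prod hp n E).add (summable_indicator_prod hp n F)).sub
      (summable_prod_pmf hp n).1
  have h1 : ∑' S, (E.indicator μ S + F.indicator μ S - μ S) ≤
      ∑' S, (E ∩ F).indicator μ S :=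
    Summable.tsum_le_tsum key hsum (summable_indicator_prod hp n (E ∩ F))
  rw [Summable.tsum_sub ((summable_indicator_prod hp n E).add (summable_indicator_prod hp n F))
      (summable_prod_pmf hp n).1,
    Summable.tsum_add (summable_indicator_prod hp n E) (summable_indicator_prod hp n F),
    (summable_prod_pmf hp n).2] at h1
  exact h1

lemma iidProb_biInter {p : X → ℝ} (hp : IsPMF p) {n : ℕ} (s : Finset ℕ)
    (E : ℕ → Set (Fin n → X)) (c : ℝ)
    (h : ∀ i ∈ s, 1 - c ≤ iidProb p n (E i)) :
    1 - (s.card : ℝ) * c ≤ iidProb p n (⋂ i ∈ s, E i) := by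
  induction s using Finset.induction_on with
  | empty => simp [iidProb_univ hp n]
  | @insert a s ha ih =>
    have h1 := h a (Finset.mem_insert_self a s)
    have h2 := ih (fun i hi => h i (Finset.mem_insert_of_mem hi))
    have h3 := iidProb_inter hp (E a) (⋂ i ∈ s, E i)
    have h4 : (⋂ i ∈ insert a s, E i) = E a ∩ ⋂ i ∈ s, E i := by
      simp [Set.biInter_insert]
    rw [h4, Finset.card_insert_of_notMem ha]
    push_cast
    linarith

lemma distToClass_nonneg (p : X → ℝ) (C : Set (X → ℝ)) : 0 ≤ distToClass p C :=
  Real.sInf_nonneg (by rintro x ⟨q, _, rfl⟩; exact dTV_nonneg p q)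

end Lemmas
/-- if `C` is `η`-`α`-robustly learnable for every `η ∈ (0,1)`,
then `C` is `3α`-robustly learnable. -/
theorem eta_robust_all_eta_implies_robust {X : Type*} [Countable X]
    (C : Set (X → ℝ)) (hC : ∀ p ∈ C, IsPMF p) (α : ℝ) (hα : 1 ≤ α)
    (h : ∀ η ∈ Set.Ioo (0:ℝ) 1, EtaRobustlyLearnable C η α) :
    RobustlyLearnable C (3 * α) := by
  classical
  choose A hA nc hnc using h
  have hhalf : (1/2 : ℝ) ∈ Set.Ioo (0:ℝ) 1 := by norm_num
  set A' : ℕ → ℕ → (n : ℕ) → (Fin n → X) → (X → ℝ) := fun k i =>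
    if hm : ((i:ℝ)/(k:ℝ)) ∈ Set.Ioo (0:ℝ) 1 then A _ hm else A _ hhalf with hA'def
  set nc' : ℕ → ℕ → ℝ → ℝ → ℕ := fun k i =>
    if hm : ((i:ℝ)/(k:ℝ)) ∈ Set.Ioo (0:ℝ) 1 then nc _ hm else nc _ hhalf with hnc'def
  set M : ℕ → ℕ := fun k => (Finset.Icc 1 (k-1)).sup
      (fun i => nc' k i (1/(k:ℝ)) (1/(k:ℝ)^2)) with hMdef
  set N : ℕ → ℕ := fun k => k + (Finset.range (k+1)).sup M with hNdef
  set K : ℕ → ℕ := fun n => max 2 (Nat.findGreatest (fun k => N k ≤ n) n) with hKdef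
  set sel : ℕ → (ℕ → (X → ℝ)) → ℕ := fun k hs =>
    if hex : ∃ i, 1 ≤ i ∧ i ≤ k - 1 ∧ ∀ j, i ≤ j → j ≤ k - 1 →
        dTV (hs i) (hs j) ≤ α * ((i:ℝ) + (j:ℝ)) / (k:ℝ) + 2 / (k:ℝ)
      then Nat.find hex else 1 with hseldef
  clear_value A' nc' M N K sel
  have hA'learner : ∀ k i, IsLearner (A' k i) := by
    intro k i
    simp only [hA'def]
    split <;> exact hA _ _
  refine ⟨fun n S => A' (K n) (sel (K n) (fun i => A' (K n) i n S)) n S,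
    fun n S => hA'learner _ _ n S,
    fun ε δ => N (2 + ⌈(3*α+3)/ε⌉₊ + ⌈1/δ⌉₊), ?_⟩
  intro p hp ε hε δ hδ n hn
  show 1 - δ ≤ iidProb p n
    {S | dTV (A' (K n) (sel (K n) fun i => A' (K n) i n S) n S) p
      ≤ 3 * α * distToClass p C + ε}
  set K₀ := 2 + ⌈(3*α+3)/ε⌉₊ + ⌈1/δ⌉₊ with hK0def
  have hNle : ∀ k, k ≤ N k := fun k => by simp only [hNdef]; exact Nat.le_add_right _ _
  set k := K n with hkdef
  have hK0n : N K₀ ≤ n := hn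
  have hK0nn : K₀ ≤ n := le_trans (hNle K₀) hK0n
  have hfg : K₀ ≤ Nat.findGreatest (fun k => N k ≤ n) n :=
    Nat.le_findGreatest hK0nn hK0n
  have hkK0 : K₀ ≤ k := by
    rw [hkdef, hKdef]
    exact le_trans hfg (le_max_right _ _)
  have hK02 : 2 ≤ K₀ := by simp only [hK0def]; omega
  have hk2 : 2 ≤ k := le_trans hK02 hkK0
  have hNkn : N k ≤ n := by
    have h2 : 2 ≤ Nat.findGreatest (fun k => N k ≤ n) n := le_trans hK02 hfg
    have hkeq : k = Nat.findGreatest (fun k => N k ≤ n) n := by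
      rw [hkdef, hKdef]; exact max_eq_right h2
    rw [hkeq]
    exact Nat.findGreatest_spec (P := fun k => N k ≤ n) hK0nn hK0n
  clear_value k
  have hkR : (2:ℝ) ≤ (k:ℝ) := by exact_mod_cast hk2
  have hkpos : (0:ℝ) < (k:ℝ) := by linarith
  have hδk : 1/(k:ℝ) ≤ δ := by
    have h1 : (⌈1/δ⌉₊ : ℝ) ≤ (k:ℝ) := by
      have : ⌈1/δ⌉₊ ≤ k := by
        have hcopy := hkK0; simp only [hK0def] at hcopy; omega
      exact_mod_cast this
    have h2 : 1/δ ≤ (k:ℝ) := le_trans (Nat.le_ceil _) h1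
    exact (one_div_le hkpos hδ.1).mpr h2
  have hεk : (3*α+3)/(k:ℝ) ≤ ε := by
    have h1 : (⌈(3*α+3)/ε⌉₊ : ℝ) ≤ (k:ℝ) := by
      have : ⌈(3*α+3)/ε⌉₊ ≤ k := by
        have hcopy := hkK0; simp only [hK0def] at hcopy; omega
      exact_mod_cast this
    have h2 : (3*α+3)/ε ≤ (k:ℝ) := le_trans (Nat.le_ceil _) h1
    rw [div_le_iff₀ hkpos]
    have h3 : 3*α+3 ≤ (k:ℝ) * ε := (div_le_iff₀ hε.1).mp h2
    linarith
  set d := distToClass p C with hddef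
  have hd0 : 0 ≤ d := distToClass_nonneg p C
  clear_value d
  by_cases hdk : d ≤ ((k:ℝ)-1)/(k:ℝ)
  · -- main case: grid argument
    set i₀ := max 1 ⌈d * (k:ℝ)⌉₊ with hi0def
    have hi01 : 1 ≤ i₀ := le_max_left _ _
    have hi0k : i₀ ≤ k - 1 := by
      have hceil : ⌈d * (k:ℝ)⌉₊ ≤ k - 1 := by
        rw [Nat.ceil_le]
        have : ((k:ℝ)-1) = ((k-1 : ℕ) : ℝ) := by
          push_cast [Nat.cast_sub (by omega : 1 ≤ k)]; ring
        rw [← this]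
        calc d * (k:ℝ) ≤ (((k:ℝ)-1)/(k:ℝ)) * (k:ℝ) :=
              mul_le_mul_of_nonneg_right hdk hkpos.le
          _ = (k:ℝ) - 1 := by field_simp
      have : 1 ≤ k - 1 := by omega
      omega
    have hdi0 : d ≤ (i₀:ℝ)/(k:ℝ) := by
      rw [le_div_iff₀ hkpos]
      calc d * (k:ℝ) ≤ (⌈d * (k:ℝ)⌉₊ : ℝ) := Nat.le_ceil _
        _ ≤ (i₀:ℝ) := by exact_mod_cast le_max_right _ _
    have hi0d : (i₀:ℝ) ≤ d * (k:ℝ) + 1 := by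
      rw [hi0def]
      push_cast [Nat.cast_max]
      refine max_le (by nlinarith) ?_
      exact (Nat.ceil_lt_add_one (by positivity)).le
    clear_value i₀
    set E : ℕ → Set (Fin n → X) := fun i =>
      {S | dTV (A' k i n S) p ≤ α * ((i:ℝ)/(k:ℝ)) + 1/(k:ℝ)} with hEdef
    clear_value E
    have hbase : ∀ i ∈ Finset.Icc i₀ (k-1), 1 - 1/(k:ℝ)^2 ≤ iidProb p n (E i) := by
      intro i hi
      rw [Finset.mem_Icc] at hi
      have hi1 : 1 ≤ i := le_trans hi01 hi.1
      have hik : i < k := by omega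
      have hmem : ((i:ℝ)/(k:ℝ)) ∈ Set.Ioo (0:ℝ) 1 := by
        constructor
        · have : (0:ℝ) < (i:ℝ) := by exact_mod_cast hi1
          positivity
        · rw [div_lt_one hkpos]; exact_mod_cast hik
      have hd_le : distToClass p C ≤ (i:ℝ)/(k:ℝ) := by
        rw [← hddef]
        refine le_trans hdi0 ?_
        have hle : (i₀:ℝ) ≤ (i:ℝ) := by exact_mod_cast hi.1
        gcongr
      have hnge : nc ((i:ℝ)/(k:ℝ)) hmem (1/(k:ℝ)) (1/(k:ℝ)^2) ≤ n := by
        have e1 : nc ((i:ℝ)/(k:ℝ)) hmem (1/(k:ℝ)) (1/(k:ℝ)^2)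
            = nc' k i (1/(k:ℝ)) (1/(k:ℝ)^2) := by
          simp only [hnc'def]; rw [dif_pos hmem]
        rw [e1]
        have e2 : nc' k i (1/(k:ℝ)) (1/(k:ℝ)^2) ≤ M k := by
          simp only [hMdef]
          exact Finset.le_sup (f := fun i => nc' k i (1/(k:ℝ)) (1/(k:ℝ)^2))
            (Finset.mem_Icc.mpr ⟨hi1, hi.2⟩)
        have e3 : M k ≤ (Finset.range (k+1)).sup M :=
          Finset.le_sup (Finset.mem_range.mpr (by omega))
        have e4 : (Finset.range (k+1)).sup M ≤ N k := by
          simp only [hNdef]; exact Nat.le_add_left _ _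
        omega
      have hguar := hnc ((i:ℝ)/(k:ℝ)) hmem p hp hd_le (1/(k:ℝ))
        ⟨by positivity, by rw [div_lt_one hkpos]; linarith⟩
        (1/(k:ℝ)^2)
        ⟨by positivity, by rw [div_lt_one (by positivity)]; nlinarith⟩ n hnge
      have eA : A' k i = A ((i:ℝ)/(k:ℝ)) hmem := by
        simp only [hA'def]; rw [dif_pos hmem]
      simp only [hEdef]
      rw [eA]
      exact hguar
    have hcard : ((Finset.Icc i₀ (k-1)).card : ℝ) ≤ (k:ℝ) := by
      have h1 : (Finset.Icc i₀ (k-1)).card ≤ k := by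
        rw [Nat.card_Icc]; omega
      exact_mod_cast h1
    have hbig := iidProb_biInter hp (Finset.Icc i₀ (k-1)) E (1/(k:ℝ)^2) hbase
    have hprob : 1 - δ ≤ iidProb p n (⋂ i ∈ Finset.Icc i₀ (k-1), E i) := by
      have hm : ((Finset.Icc i₀ (k-1)).card : ℝ) * (1/(k:ℝ)^2) ≤ 1/(k:ℝ) := by
        have hk0 : (k:ℝ) ≠ 0 := ne_of_gt hkpos
        have h1 : ((Finset.Icc i₀ (k-1)).card : ℝ) * (1/(k:ℝ)^2)
            ≤ (k:ℝ) * (1/(k:ℝ)^2) := mul_le_mul_of_nonneg_right hcard (by positivity)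
        have h2 : (k:ℝ) * (1/(k:ℝ)^2) = 1/(k:ℝ) := by field_simp
        linarith
      linarith
    refine le_trans hprob (iidProb_mono hp ?_)
    intro S hS
    simp only [Set.mem_iInter] at hS
    have hSmem : ∀ i, i₀ ≤ i → i ≤ k-1 → dTV (A' k i n S) p ≤ α * ((i:ℝ)/(k:ℝ)) + 1/(k:ℝ) := by
      intro i h1 h2
      have := hS i (Finset.mem_Icc.mpr ⟨h1, h2⟩)
      simp only [hEdef] at this
      exact this
    have hspmf : ∀ i, IsPMF (A' k i n S) := fun i => hA'learner k i n S
    have hex : ∃ i, 1 ≤ i ∧ i ≤ k - 1 ∧ ∀ j, i ≤ j → j ≤ k - 1 →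
        dTV (A' k i n S) (A' k j n S) ≤ α * ((i:ℝ) + (j:ℝ)) / (k:ℝ) + 2 / (k:ℝ) := by
      refine ⟨i₀, hi01, hi0k, fun j hj1 hj2 => ?_⟩
      have ha := hSmem i₀ le_rfl hi0k
      have hb := hSmem j hj1 hj2
      have htri := dTV_triangle (hspmf i₀) hp (hspmf j)
      rw [dTV_comm p (A' k j n S)] at htri
      have harith : α * ((i₀:ℝ) + (j:ℝ)) / (k:ℝ) + 2 / (k:ℝ)
          = (α * ((i₀:ℝ)/(k:ℝ)) + 1/(k:ℝ)) + (α * ((j:ℝ)/(k:ℝ)) + 1/(k:ℝ)) := by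
        ring
      rw [harith]
      linarith
    have hseleq : sel k (fun i => A' k i n S) = Nat.find hex := by
      simp only [hseldef]
      rw [dif_pos hex]
    have hspec := Nat.find_spec hex
    have hiile : Nat.find hex ≤ i₀ := Nat.find_min' hex ⟨hi01, hi0k, by
      intro j hj1 hj2
      have ha := hSmem i₀ le_rfl hi0k
      have hb := hSmem j hj1 hj2
      have htri := dTV_triangle (hspmf i₀) hp (hspmf j)
      rw [dTV_comm p (A' k j n S)] at htri
      have harith : α * ((i₀:ℝ) + (j:ℝ)) / (k:ℝ) + 2 / (k:ℝ)
          = (α * ((i₀:ℝ)/(k:ℝ)) + 1/(k:ℝ)) + (α * ((j:ℝ)/(k:ℝ)) + 1/(k:ℝ)) := by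
        ring
      rw [harith]; linarith⟩
    generalize hgen : Nat.find hex = ii at hspec hiile hseleq
    obtain ⟨hii1, hiik, hiiprop⟩ := hspec
    have hiii₀ := hiiprop i₀ hiile hi0k
    have hi₀p := hSmem i₀ le_rfl hi0k
    have htri := dTV_triangle (hspmf ii) (hspmf i₀) hp
    have hfin : dTV (A' k ii n S) p ≤ 3*α*d + ε := by
      have hα0 : (0:ℝ) ≤ α := by linarith only [hα]
      have hiiR : (ii:ℝ) ≤ (i₀:ℝ) := by exact_mod_cast hiile
      have e1 : α * ((ii:ℝ) + (i₀:ℝ)) / (k:ℝ)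
          = α * ((ii:ℝ)/(k:ℝ)) + α * ((i₀:ℝ)/(k:ℝ)) := by ring
      have e2 : α * ((ii:ℝ)/(k:ℝ)) ≤ α * ((i₀:ℝ)/(k:ℝ)) := by gcongr
      have hi0k' : (i₀:ℝ)/(k:ℝ) ≤ d + 1/(k:ℝ) := by
        rw [div_le_iff₀ hkpos]
        calc (i₀:ℝ) ≤ d * (k:ℝ) + 1 := hi0d
          _ = (d + 1/(k:ℝ)) * (k:ℝ) := by
            rw [add_mul, one_div_mul_cancel (ne_of_gt hkpos)]
      have e3 : α * ((i₀:ℝ)/(k:ℝ)) ≤ α * (d + 1/(k:ℝ)) := by gcongr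
      have e4 : α * (d + 1/(k:ℝ)) = α * d + α * (1/(k:ℝ)) := by ring
      have e5 : (3*α+3)/(k:ℝ) = 3*(α*(1/(k:ℝ))) + 3*(1/(k:ℝ)) := by ring
      have e6 : (2:ℝ)/(k:ℝ) = 2*(1/(k:ℝ)) := by ring
      linarith only [htri, hiii₀, hi₀p, e1, e2, e3, e4, e5, e6, hεk]
    show S ∈ {S | dTV (A' k (sel k fun i => A' k i n S) n S) p ≤ 3 * α * d + ε}
    simp only [Set.mem_setOf_eq, hseleq]
    exact hfin
  · -- trivial case: d > (k-1)/k ≥ 1/2, so 3αd ≥ 1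
    push_neg at hdk
    have h1 : (1:ℝ)/2 ≤ ((k:ℝ)-1)/(k:ℝ) := by
      rw [div_le_div_iff₀ (by norm_num) hkpos]; linarith
    have hd2 : (1:ℝ)/2 ≤ d := by linarith only [hdk, h1]
    have hm2 : (1:ℝ) * (1/2) ≤ α * d :=
      mul_le_mul hα hd2 (by norm_num) (by linarith only [hα])
    have h3 : (1:ℝ) ≤ 3*α*d := by linarith only [hm2]
    have hsub : Set.univ ⊆ {S : Fin n → X |
        dTV (A' k (sel k fun i => A' k i n S) n S) p ≤ 3 * α * d + ε} := by
      intro S _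
      simp only [Set.mem_setOf_eq]
      have := dTV_le_one (hA'learner k (sel k fun i => A' k i n S) n S) hp
      linarith only [this, h3, hε.1]
    have := iidProb_mono hp hsub
    rw [iidProb_univ hp n] at this
    linarith only [this, hδ.1]

end RobustDistLearn
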